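/- Let Ψ ∈ ℂ^{n×n} be the unitary DFT matrix and Φ = Ψ* diag(λ) Ψ a circulant matrix whose spectrum satisfies λ[k] = 0 for k ∈ [n₀] and λ[k] ≠ 0 for k ∈ {n₀+1,…,n}, where n₀ < n. Set T = Φ Ψ* and restrict to the nonzero columns, i.e. consider T' = T[e_{n₀+1},…,e_n] and T̃' = ((T')†)*, with local incoherence parameters μ_k = (n−n₀) γ ‖T' e_{k−n₀}‖_∞² and μ̃_k = (n−n₀) γ^{−1} ‖T̃' e_{k−n₀}‖_∞² for k ∈ {n₀+1,…,n} and any γ > 0. Then μ_k μ̃_k is the same for all k ∈ {n₀+1,…,n}, and the variable density sampling distribution P(ω = k) = √(μ_k μ̃_k)/Σ_{j=n₀+1}^n √(μ_j μ̃_j) is the uniform distribution on {n₀+1,…,n}, i.e. P(ω = k) = 1/(n−n₀) for each such k. -/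

import Mathlib

open scoped BigOperators ENNReal
open Classical MeasureTheory
open scoped Matrix

noncomputable section

namespace TSR

/-- ℓ2 norm of a finite complex vector. -/
def l2norm {d : ℕ} (v : Fin d → ℂ) : ℝ := Real.sqrt (∑ i, ‖v i‖ ^ 2)

/-- ℓ1 norm of a finite complex vector. -/
def l1norm {d : ℕ} (v : Fin d → ℂ) : ℝ := ∑ i, ‖v i‖

/-- ℓ∞ norm of a finite complex vector. -/
def linfnorm {d : ℕ} (v : Fin d → ℂ) : ℝ := ⨆ i, ‖v i‖

/-- Spectral norm (`ℓ2 → ℓ2` operator norm) of a matrix. -/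
def specNorm {d e : ℕ} (A : Matrix (Fin d) (Fin e) ℂ) : ℝ :=
  ‖LinearMap.toContinuousLinearMap (Matrix.toEuclideanLin A)‖

/-- Largest singular value. -/
def sigmaMax {d e : ℕ} (A : Matrix (Fin d) (Fin e) ℂ) : ℝ := specNorm A

/-- Smallest singular value: the infimum of `‖A v‖₂` over unit vectors `v`. -/
def sigmaMin {d e : ℕ} (A : Matrix (Fin d) (Fin e) ℂ) : ℝ :=
  sInf {r : ℝ | ∃ v : Fin e → ℂ, l2norm v = 1 ∧ r = l2norm (A.mulVec v)}

/-- Maximum ℓ2 norm of the columns of a matrix (the `1 → 2` operator norm). -/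
def maxColL2 {d e : ℕ} (A : Matrix (Fin d) (Fin e) ℂ) : ℝ :=
  ⨆ k : Fin e, l2norm (fun i => A i k)

/-- `B` is the Moore–Penrose pseudoinverse of `A` (the four Penrose conditions). -/
def IsMoorePenrose {ι κ : Type*} [Fintype ι] [Fintype κ] [DecidableEq ι] [DecidableEq κ]
    (A : Matrix ι κ ℂ) (B : Matrix κ ι ℂ) : Prop :=
  A * B * A = A ∧ B * A * B = B ∧ (A * B)ᴴ = A * B ∧ (B * A)ᴴ = B * A

/-- `γ > 0` minimizes `‖γ' T*T − I‖` over `γ' > 0` (the balancing parameter). -/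
def IsBalancing {e d : ℕ} (T : Matrix (Fin d) (Fin e) ℂ) (γ : ℝ) : Prop :=
  0 < γ ∧ ∀ γ' : ℝ, 0 < γ' →
    specNorm ((γ : ℂ) • (Tᴴ * T) - 1) ≤ specNorm ((γ' : ℂ) • (Tᴴ * T) - 1)

/-- Local incoherence parameter `n γ ‖A e_k‖_∞²` of the `k`-th column. -/
def locIncoh {e d : ℕ} (γ : ℝ) (A : Matrix (Fin d) (Fin e) ℂ) (k : Fin e) : ℝ :=
  (e : ℝ) * γ * (linfnorm fun i => A i k) ^ 2

/-- The (worst case) incoherence parameter `μ`. -/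
def incoherence {e d : ℕ} (γ : ℝ) (T Ttil : Matrix (Fin d) (Fin e) ℂ) : ℝ :=
  ⨆ k : Fin e, max (locIncoh γ T k) (locIncoh γ⁻¹ Ttil k)

/-- The variable-density weight `√(μ_k μ̃_k)`. -/
def vdWeight {e d : ℕ} (γ : ℝ) (T Ttil : Matrix (Fin d) (Fin e) ℂ) (k : Fin e) : ℝ :=
  Real.sqrt (locIncoh γ T k * locIncoh γ⁻¹ Ttil k)

/-- The average incoherence parameter `μ̄ = (1/n) ∑ √(μ_k μ̃_k)`. -/
def avgIncoh {e d : ℕ} (γ : ℝ) (T Ttil : Matrix (Fin d) (Fin e) ℂ) : ℝ :=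
  (1 / (e : ℝ)) * ∑ k, vdWeight γ T Ttil k

/-- The sampling matrix `S_Ω` of a multiset of indices `ω : Fin m → Fin n`. -/
def sampMat {n m : ℕ} (ω : Fin m → Fin n) : Matrix (Fin m) (Fin n) ℂ :=
  fun j k => if ω j = k then 1 else 0

/-- Coordinate projection `Π_J` onto a set of coordinates, as a matrix. -/
def projMat {d : ℕ} (J : Set (Fin d)) : Matrix (Fin d) (Fin d) ℂ :=
  fun i j => if i = j ∧ i ∈ J then 1 else 0

/-- Number of non-zero entries. -/
def sparsity {d : ℕ} (v : Fin d → ℂ) : ℕ :=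
  (Finset.univ.filter fun i => v i ≠ 0).card

/-- Number of distinct elements of the multiset `Ω` (that is, `|Ω'|`). -/
def distinctCard {n m : ℕ} (ω : Fin m → Fin n) : ℕ :=
  (Finset.image ω Finset.univ).card

/-- Maximal multiplicity of an element of the multiset `Ω`. -/
def maxMult {n m : ℕ} (ω : Fin m → Fin n) : ℕ :=
  Finset.univ.sup fun k : Fin n => (Finset.univ.filter fun j => ω j = k).card

/-- Entrywise complex signum. -/
def csgn {d : ℕ} (z : Fin d → ℂ) : Fin d → ℂ :=
  fun k => if z k = 0 then 0 else z k / (‖z k‖ : ℂ)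

/-- `G` is a partition of the coordinates into disjoint nonempty groups. -/
def IsPartition {L N : ℕ} (G : Fin N → Finset (Fin L)) : Prop :=
  (∀ j, (G j).Nonempty) ∧ (∀ j j', j ≠ j' → Disjoint (G j) (G j')) ∧
    Finset.univ.biUnion G = Finset.univ

/-- The mixed (group) norm `‖z‖_{𝒢,1} = ∑_j ‖Π_{𝒢_j} z‖₂`. -/
def mixedNorm {L N : ℕ} (G : Fin N → Finset (Fin L)) (z : Fin L → ℂ) : ℝ :=
  ∑ j, Real.sqrt (∑ i ∈ G j, ‖z i‖ ^ 2)

/-- `z` is `(s,t)` strongly group sparse with respect to the partition `G`. -/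
def StronglyGroupSparse {L N : ℕ} (G : Fin N → Finset (Fin L)) (s t : ℕ)
    (z : Fin L → ℂ) : Prop :=
  ∃ J : Finset (Fin N), (∀ i, z i ≠ 0 → i ∈ J.biUnion G) ∧
    (J.biUnion G).card ≤ t ∧ J.card ≤ s

/-- Group local incoherence `max_j n γ ‖Π_{𝒢_j} A e_k‖₂²`. -/
def groupLocIncoh {n L N : ℕ} (G : Fin N → Finset (Fin L)) (γ : ℝ)
    (A : Matrix (Fin L) (Fin n) ℂ) (k : Fin n) : ℝ :=
  ⨆ j : Fin N, (n : ℝ) * γ * ∑ i ∈ G j, ‖A i k‖ ^ 2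

/-- Group incoherence parameter `μ_𝒢`. -/
def groupIncoh {n L N : ℕ} (G : Fin N → Finset (Fin L)) (γ : ℝ)
    (T Ttil : Matrix (Fin L) (Fin n) ℂ) : ℝ :=
  ⨆ k : Fin n, max (groupLocIncoh G γ T k) (groupLocIncoh G γ⁻¹ Ttil k)

/-- Group variable density weight `√(μ_{𝒢,k} μ̃_{𝒢,k})`. -/
def groupVdWeight {n L N : ℕ} (G : Fin N → Finset (Fin L)) (γ : ℝ)
    (T Ttil : Matrix (Fin L) (Fin n) ℂ) (k : Fin n) : ℝ :=
  Real.sqrt (groupLocIncoh G γ T k * groupLocIncoh G γ⁻¹ Ttil k)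

/-- Group average incoherence `μ̄_𝒢`. -/
def groupAvgIncoh {n L N : ℕ} (G : Fin N → Finset (Fin L)) (γ : ℝ)
    (T Ttil : Matrix (Fin L) (Fin n) ℂ) : ℝ :=
  (1 / (n : ℝ)) * ∑ k, groupVdWeight G γ T Ttil k

/-- The unitary DFT matrix. -/
def dft (n : ℕ) : Matrix (Fin n) (Fin n) ℂ :=
  fun j k => ((1 / Real.sqrt n : ℝ) : ℂ) *
    Complex.exp (-(2 * Real.pi * Complex.I * (j : ℕ) * (k : ℕ)) / n)

/-! Since `Ψ Ψ* = 1`, `T = Ψ* diag(λ)`: its columns are orthogonal and each has entries of constant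
modulus `|λ_k| / √n`. For a matrix with orthogonal nonzero columns the pseudoinverse is
`(T'* T')⁻¹ T'*`, so the `k`-th column of `T̃'` is that of `T'` divided by its squared length
`|λ_k|²`. In `μ_k μ̃_k` the factors `γ` and `|λ_k|` cancel, leaving `((n - n₀) / n)²`. -/

lemma norm_dft_apply (n : ℕ) (j k : Fin n) : ‖dft n j k‖ = (Real.sqrt n)⁻¹ := by
  have harg : -(2 * Real.pi * Complex.I * (j : ℕ) * (k : ℕ)) / n
      = ((-(2 * Real.pi * (j : ℕ) * (k : ℕ) / n) : ℝ) : ℂ) * Complex.I := by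
    push_cast
    ring
  rw [dft, harg, norm_mul, Complex.norm_exp_ofReal_mul_I, Complex.norm_real, Real.norm_eq_abs,
    mul_one, abs_of_nonneg (by positivity), one_div]

lemma dft_apply_mul_conj_dft_apply (n : ℕ) (a b m : Fin n) :
    dft n a m * starRingEnd ℂ (dft n b m) =
      (n : ℂ)⁻¹ * (Complex.exp (2 * Real.pi * Complex.I / n) ^ ((b : ℤ) - a)) ^ (m : ℕ) := by
  have hsq : ((1 / Real.sqrt n : ℝ) : ℂ) * ((1 / Real.sqrt n : ℝ) : ℂ) = (n : ℂ)⁻¹ := by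
    rw [← Complex.ofReal_mul, div_mul_div_comm, one_mul, Real.mul_self_sqrt (Nat.cast_nonneg n)]
    push_cast
    exact one_div _
  rw [← zpow_natCast, ← zpow_mul, ← Complex.exp_int_mul, dft, dft, map_mul, Complex.conj_ofReal,
    ← Complex.exp_conj, mul_mul_mul_comm, hsq, ← Complex.exp_add]
  congr 2
  simp only [map_div₀, map_neg, map_mul, map_ofNat, Complex.conj_ofReal, Complex.conj_I,
    map_natCast]
  push_cast
  ring

lemma dft_mul_conjTranspose_dft (n : ℕ) : dft n * (dft n)ᴴ = 1 := by
  rcases eq_or_ne n 0 with rfl | hn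
  · ext a
    exact a.elim0
  have hω := Complex.isPrimitiveRoot_exp n hn
  ext a b
  simp only [Matrix.mul_apply, Matrix.conjTranspose_apply, RCLike.star_def,
    dft_apply_mul_conj_dft_apply, ← Finset.mul_sum, Matrix.one_apply]
  rw [Fin.sum_univ_eq_sum_range (fun m => (_ : ℂ) ^ m)]
  set ζ := Complex.exp (2 * Real.pi * Complex.I / n) ^ ((b : ℤ) - a)
  split_ifs with hab
  · subst hab
    simp [ζ, hn]
  · have hζ : ζ ≠ 1 := by
      rw [Ne, hω.zpow_eq_one_iff_dvd]
      intro hdvd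
      refine hab (Fin.ext ?_)
      have := Int.eq_zero_of_dvd_of_natAbs_lt_natAbs hdvd (by omega)
      omega
    have hζn : ζ ^ n = 1 := by
      rw [← zpow_natCast, ← zpow_mul, mul_comm ((b : ℤ) - a), zpow_mul, zpow_natCast,
        hω.pow_eq_one, one_zpow]
    rw [geom_sum_eq hζ, hζn, sub_self, zero_div, mul_zero]

open Matrix

lemma IsMoorePenrose.unique {ι κ : Type*} [Fintype ι] [Fintype κ] [DecidableEq ι] [DecidableEq κ]
    {A : Matrix ι κ ℂ} {B C : Matrix κ ι ℂ}
    (hB : IsMoorePenrose A B) (hC : IsMoorePenrose A C) : B = C := by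
  obtain ⟨hB₁, hB₂, hB₃, hB₄⟩ := hB
  obtain ⟨hC₁, hC₂, hC₃, hC₄⟩ := hC
  have hAB : A * B = A * C :=
    calc A * B = (A * C * A * B)ᴴ := by rw [hC₁, hB₃]
      _ = (A * B)ᴴ * (A * C)ᴴ := by simp only [conjTranspose_mul, Matrix.mul_assoc]
      _ = A * C := by rw [hB₃, hC₃, ← Matrix.mul_assoc, hB₁]
  have hBA : B * A = C * A :=
    calc B * A = (B * A * C * A)ᴴ := by rw [Matrix.mul_assoc B A C, Matrix.mul_assoc, hC₁, hB₄]
      _ = (C * A)ᴴ * (B * A)ᴴ := by simp only [conjTranspose_mul, Matrix.mul_assoc]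
      _ = C * A := by rw [hC₄, hB₄, Matrix.mul_assoc, ← Matrix.mul_assoc A, hB₁]
  calc B = B * A * B := hB₂.symm
    _ = C * A * C := by rw [hBA, Matrix.mul_assoc, hAB, ← Matrix.mul_assoc]
    _ = C := hC₂

lemma isMoorePenrose_nonsing_inv_mul_conjTranspose {ι κ : Type*} [Fintype ι] [Fintype κ]
    [DecidableEq ι] [DecidableEq κ] {A : Matrix ι κ ℂ} (hA : IsUnit (Aᴴ * A).det) :
    IsMoorePenrose A ((Aᴴ * A)⁻¹ * Aᴴ) := by
  have hBA : (Aᴴ * A)⁻¹ * Aᴴ * A = 1 := by rw [Matrix.mul_assoc, nonsing_inv_mul _ hA]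
  have hinv : ((Aᴴ * A)⁻¹)ᴴ = (Aᴴ * A)⁻¹ := (isHermitian_conjTranspose_mul_self A).inv
  refine ⟨by rw [Matrix.mul_assoc, hBA, Matrix.mul_one], by rw [hBA, Matrix.one_mul], ?_,
    by rw [hBA, conjTranspose_one]⟩
  rw [← Matrix.mul_assoc, conjTranspose_mul, conjTranspose_mul, conjTranspose_conjTranspose, hinv,
    Matrix.mul_assoc]

lemma IsMoorePenrose.conjTranspose_eq {ι κ : Type*} [Fintype ι] [Fintype κ]
    [DecidableEq ι] [DecidableEq κ] {A : Matrix ι κ ℂ} {B : Matrix κ ι ℂ}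
    (hB : IsMoorePenrose A B) (hA : IsUnit (Aᴴ * A).det) : Bᴴ = A * (Aᴴ * A)⁻¹ := by
  rw [hB.unique (isMoorePenrose_nonsing_inv_mul_conjTranspose hA), conjTranspose_mul,
    conjTranspose_conjTranspose, (isHermitian_conjTranspose_mul_self A).inv]

lemma conjTranspose_mul_self_apply_self {ι κ : Type*} [Fintype ι] (A : Matrix ι κ ℂ) (k : κ) :
    (Aᴴ * A) k k = ((∑ i, ‖A i k‖ ^ 2 : ℝ) : ℂ) := by
  simp [mul_apply, Complex.conj_mul']

lemma linfnorm_eq_of_forall_norm_eq {d : ℕ} [NeZero d] {v : Fin d → ℂ} {c : ℝ}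
    (hv : ∀ i, ‖v i‖ = c) : linfnorm v = c := by
  simp only [linfnorm, hv, ciSup_const]

lemma _root_.Matrix.IsDiag.conjTranspose_mul_self_submatrix {ι κ κ' : Type*} [Fintype ι]
    {A : Matrix ι κ ℂ} (hA : (Aᴴ * A).IsDiag) {f : κ' → κ} (hf : Function.Injective f) :
    ((A.submatrix id f)ᴴ * A.submatrix id f).IsDiag := by
  rw [conjTranspose_submatrix, ← submatrix_mul _ _ _ _ _ Function.bijective_id]
  exact hA.submatrix hf

lemma isDiag_conjTranspose_mul_self_conjTranspose_mul_diagonal {ι κ : Type*} [Fintype ι]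
    [Fintype κ] [DecidableEq κ] {U : Matrix κ ι ℂ} (hU : U * Uᴴ = 1) (v : κ → ℂ) :
    ((Uᴴ * diagonal v)ᴴ * (Uᴴ * diagonal v)).IsDiag := by
  rw [conjTranspose_mul, conjTranspose_conjTranspose, Matrix.mul_assoc, ← Matrix.mul_assoc U, hU,
    Matrix.one_mul, diagonal_conjTranspose, diagonal_mul_diagonal]
  exact isDiag_diagonal _

lemma locIncoh_mul_locIncoh_conjTranspose_of_isMoorePenrose {N e : ℕ} [NeZero N]
    {A : Matrix (Fin N) (Fin e) ℂ} {B : Matrix (Fin e) (Fin N) ℂ} (hB : IsMoorePenrose A B)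
    (horth : (Aᴴ * A).IsDiag) {c : Fin e → ℝ} (hflat : ∀ i k, ‖A i k‖ = c k)
    (hc : ∀ k, c k ≠ 0) {γ : ℝ} (hγ : γ ≠ 0) (k : Fin e) :
    locIncoh γ A k * locIncoh γ⁻¹ Bᴴ k = ((e : ℝ) / N) ^ 2 := by
  set d : Fin e → ℂ := fun k => ((N * c k ^ 2 : ℝ) : ℂ)
  have hd : ∀ k, d k ≠ 0 := fun k => by simp [d, NeZero.ne, hc]
  have hgram : Aᴴ * A = diagonal d := by
    rw [← horth.diagonal_diag]
    congr 1
    ext k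
    simp [diag, conjTranspose_mul_self_apply_self, hflat, d]
  have hBA : Bᴴ = A * diagonal d⁻¹ := by
    have hunit : IsUnit (Aᴴ * A).det := by
      rw [hgram, det_diagonal]
      exact (Finset.prod_ne_zero_iff.mpr fun k _ => hd k).isUnit
    have hinv : (diagonal d)⁻¹ = diagonal d⁻¹ := inv_eq_left_inv <| by
      rw [diagonal_mul_diagonal, ← diagonal_one]
      exact congrArg diagonal (funext fun k => inv_mul_cancel₀ (hd k))
    rw [hB.conjTranspose_eq hunit, hgram, hinv]
  have hcolB : ∀ i, ‖Bᴴ i k‖ = (N * c k)⁻¹ := fun i => by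
    rw [hBA, mul_diagonal, norm_mul, hflat, Pi.inv_apply, norm_inv]
    simp only [d, Complex.norm_real, Real.norm_eq_abs]
    rw [abs_of_nonneg (by positivity)]
    field_simp [hc k]
  simp only [locIncoh, linfnorm_eq_of_forall_norm_eq (hflat · k),
    linfnorm_eq_of_forall_norm_eq hcolB]
  field_simp [hc k]

lemma vdWeight_div_sum_eq_of_forall_locIncoh_mul_eq {e d : ℕ} {γ : ℝ}
    {T Ttil : Matrix (Fin d) (Fin e) ℂ} {p : ℝ} (hp : 0 < p)
    (h : ∀ k, locIncoh γ T k * locIncoh γ⁻¹ Ttil k = p) (k : Fin e) :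
    vdWeight γ T Ttil k / ∑ j, vdWeight γ T Ttil j = 1 / e := by
  simp only [vdWeight, h, Finset.sum_const, Finset.card_univ, Fintype.card_fin, nsmul_eq_mul]
  rw [div_mul_cancel_right₀ (Real.sqrt_ne_zero'.mpr hp), one_div]

/-- Corollary 1 (uniform sampling density on the non-null frequencies for a
non-injective circulant transform, e.g. 1D total variation). -/
theorem circulant_noninjective_uniform_density
    (n n₀ : ℕ) (γ : ℝ) (hγ : 0 < γ)
    (lb : Fin n → ℂ)
    (hnz : ∀ k : Fin n, n₀ ≤ (k : ℕ) → lb k ≠ 0)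
    (T : Matrix (Fin n) (Fin n) ℂ)
    (hT : T = ((dft n)ᴴ * Matrix.diagonal lb * dft n) * (dft n)ᴴ)
    (T' : Matrix (Fin n) (Fin (n - n₀)) ℂ)
    (hT' : ∀ (i : Fin n) (k : Fin (n - n₀)),
      T' i k = T i ⟨n₀ + (k : ℕ), by have := k.2; omega⟩)
    (Tdag' : Matrix (Fin (n - n₀)) (Fin n) ℂ)
    (hTdag' : IsMoorePenrose T' Tdag') :
    (∀ k k' : Fin (n - n₀),
        locIncoh γ T' k * locIncoh γ⁻¹ Tdag'ᴴ k =
          locIncoh γ T' k' * locIncoh γ⁻¹ Tdag'ᴴ k') ∧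
    (∀ k : Fin (n - n₀),
        vdWeight γ T' Tdag'ᴴ k / ∑ j, vdWeight γ T' Tdag'ᴴ j =
          1 / ((n - n₀ : ℕ) : ℝ)) := by
  set kk : Fin (n - n₀) → Fin n := fun k => ⟨n₀ + k, by omega⟩
  have hT : T = (dft n)ᴴ * diagonal lb := by
    rw [hT, Matrix.mul_assoc, dft_mul_conjTranspose_dft, Matrix.mul_one]
  have hflat : ∀ i k, ‖T' i k‖ = (Real.sqrt n)⁻¹ * ‖lb (kk k)‖ := fun i k => by
    rw [hT', hT, mul_diagonal, conjTranspose_apply, norm_mul, norm_star, norm_dft_apply]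
  have horth : (T'ᴴ * T').IsDiag := by
    rw [show T' = T.submatrix id kk from Matrix.ext hT', hT]
    refine (isDiag_conjTranspose_mul_self_conjTranspose_mul_diagonal
      (dft_mul_conjTranspose_dft n) lb).conjTranspose_mul_self_submatrix fun k k' hk => ?_
    simpa [kk, Fin.ext_iff] using hk
  have hprod (k : Fin (n - n₀)) :
      locIncoh γ T' k * locIncoh γ⁻¹ Tdag'ᴴ k = (((n - n₀ : ℕ) : ℝ) / n) ^ 2 := by
    have hn : 0 < n := by have := k.pos; omega
    have : NeZero n := ⟨hn.ne'⟩
    refine locIncoh_mul_locIncoh_conjTranspose_of_isMoorePenrose hTdag' horth hflat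
      (fun k => mul_ne_zero ?_ ?_) hγ.ne' k
    · exact inv_ne_zero (Real.sqrt_ne_zero'.mpr (Nat.cast_pos.mpr hn))
    · exact norm_ne_zero_iff.mpr (hnz _ (Nat.le_add_right _ _))
  refine ⟨fun k k' => by rw [hprod, hprod], fun k => ?_⟩
  have hpos : 0 < n - n₀ := k.pos
  exact vdWeight_div_sum_eq_of_forall_locIncoh_mul_eq
    (pow_pos (div_pos (Nat.cast_pos.mpr hpos) (Nat.cast_pos.mpr (by omega))) 2) hprod k

end TSR
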